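/- arXiv:1111.1435 — 2 statements merged into one kernel-verified Lean document; each statement's English description precedes it below -/
import Mathlib

section
/- For the Randers spray with parameter α ≠ 0, the horizontal covariant derivative of the distinguished 1-form satisfies D_{δ_j} l_i = (α/2) F_{ij}; equivalently, the electromagnetic 2-form is recovered as α F_{ij} = D_{δ_j} l_i − D_{δ_i} l_j. -/
open scoped BigOperators

variable {n : ℕ}

/-- Partial derivative of a function of `(x, y)` with respect to the fiber coordinate `y^j`. -/
noncomputable def pdy (f : (Fin n → ℝ) → (Fin n → ℝ) → ℝ) (j : Fin n) :
    (Fin n → ℝ) → (Fin n → ℝ) → ℝ :=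
  fun x y => fderiv ℝ (f x) y (Pi.single j 1)

/-- Partial derivative of a function of `(x, y)` with respect to the base coordinate `x^j`. -/
noncomputable def pdx (f : (Fin n → ℝ) → (Fin n → ℝ) → ℝ) (j : Fin n) :
    (Fin n → ℝ) → (Fin n → ℝ) → ℝ :=
  fun x y => fderiv ℝ (fun x' => f x' y) x (Pi.single j 1)

/-- Partial derivative of a function on the base manifold. -/
noncomputable def pd (f : (Fin n → ℝ) → ℝ) (j : Fin n) (x : Fin n → ℝ) : ℝ :=
  fderiv ℝ f x (Pi.single j 1)

/-- The quadratic form `g_{ij}(x) y^i y^j`. -/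
noncomputable def Qf (g : Fin n → Fin n → (Fin n → ℝ) → ℝ) (x y : Fin n → ℝ) : ℝ :=
  ∑ i, ∑ j, g i j x * y i * y j

/-- The norm `‖y‖ = √(g_{ij} y^i y^j)`. -/
noncomputable def nrm (g : Fin n → Fin n → (Fin n → ℝ) → ℝ) (x y : Fin n → ℝ) : ℝ :=
  Real.sqrt (Qf g x y)

/-- The distinguished section `l_i = g_{ik} y^k / ‖y‖`. -/
noncomputable def lf (g : Fin n → Fin n → (Fin n → ℝ) → ℝ) (i : Fin n) (x y : Fin n → ℝ) : ℝ :=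
  (∑ k, g i k x * y k) / nrm g x y

/-- The angular metric `h_{ij} = g_{ij} - l_i l_j`. -/
noncomputable def hang (g : Fin n → Fin n → (Fin n → ℝ) → ℝ) (i j : Fin n) (x y : Fin n → ℝ) : ℝ :=
  g i j x - lf g i x y * lf g j x y

/-- Horizontal derivative `δ_k f = ∂f/∂x^k - N^l_k ∂f/∂y^l` of an Ehresmann connection `N`. -/
noncomputable def deltaD (N : Fin n → Fin n → (Fin n → ℝ) → (Fin n → ℝ) → ℝ)
    (k : Fin n) (f : (Fin n → ℝ) → (Fin n → ℝ) → ℝ) (x y : Fin n → ℝ) : ℝ :=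
  pdx f k x y - ∑ l, N l k x y * pdy f l x y

/-- Curvature `R^i_{jk} = δ_k N^i_j - δ_j N^i_k` of an Ehresmann connection. -/
noncomputable def curvN (N : Fin n → Fin n → (Fin n → ℝ) → (Fin n → ℝ) → ℝ)
    (i j k : Fin n) (x y : Fin n → ℝ) : ℝ :=
  deltaD N k (N i j) x y - deltaD N j (N i k) x y

/-- Tidal tensor `E^i_j = R^i_{jk} y^k`. -/
noncomputable def tidal (N : Fin n → Fin n → (Fin n → ℝ) → (Fin n → ℝ) → ℝ)
    (i j : Fin n) (x y : Fin n → ℝ) : ℝ :=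
  ∑ k, curvN N i j k x y * y k

/-- Christoffel symbols of the metric `g` (with `ginv` its inverse). -/
noncomputable def christoffel (g ginv : Fin n → Fin n → (Fin n → ℝ) → ℝ)
    (i j k : Fin n) (x : Fin n → ℝ) : ℝ :=
  (1 / 2) * ∑ h, ginv i h x * (pd (g h j) k x + pd (g h k) j x - pd (g j k) h x)

/-- Riemann curvature tensor
`r^i_{jkl} = ∂_l γ^i_{jk} - ∂_k γ^i_{jl} + γ^h_{jk} γ^i_{hl} - γ^h_{jl} γ^i_{hk}`. -/
noncomputable def riem (g ginv : Fin n → Fin n → (Fin n → ℝ) → ℝ)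
    (i j k l : Fin n) (x : Fin n → ℝ) : ℝ :=
  pd (fun x' => christoffel g ginv i j k x') l x - pd (fun x' => christoffel g ginv i j l x') k x
    + ∑ h, christoffel g ginv h j k x * christoffel g ginv i h l x
    - ∑ h, christoffel g ginv h j l x * christoffel g ginv i h k x

/-- The Levi-Civita spray connection `N^i_j = γ^i_{jk} y^k`. -/
noncomputable def NLC (g ginv : Fin n → Fin n → (Fin n → ℝ) → ℝ)
    (i j : Fin n) (x y : Fin n → ℝ) : ℝ :=
  ∑ k, christoffel g ginv i j k x * y k

/-- Electromagnetic 2-form `F_{ij} = ∂_i A_j - ∂_j A_i` of a potential 1-form `A`. -/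
noncomputable def Fform (A : Fin n → (Fin n → ℝ) → ℝ) (i j : Fin n) (x : Fin n → ℝ) : ℝ :=
  pd (A j) i x - pd (A i) j x

/-- Randers-type spray with electromagnetic tensor `Fl` (lower indices):
`2G^i = γ^i_{jk} y^j y^k - α ‖y‖ F^i_j y^j`. -/
noncomputable def GsprayF (g ginv : Fin n → Fin n → (Fin n → ℝ) → ℝ)
    (Fl : Fin n → Fin n → (Fin n → ℝ) → ℝ) (α : ℝ) (i : Fin n) (x y : Fin n → ℝ) : ℝ :=
  (1 / 2) * ∑ j, ∑ k, christoffel g ginv i j k x * y j * y k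
    - (α / 2) * nrm g x y * ∑ j, (∑ h, ginv i h x * Fl h j x) * y j

/-- Randers spray of the Lagrangian `√(g ẋ ẋ) + α A_i ẋ^i`. -/
noncomputable def Gspray (g ginv : Fin n → Fin n → (Fin n → ℝ) → ℝ)
    (A : Fin n → (Fin n → ℝ) → ℝ) (α : ℝ) (i : Fin n) (x y : Fin n → ℝ) : ℝ :=
  GsprayF g ginv (Fform A) α i x y

/-- Spray connection `N^i_j = ∂G^i/∂y^j` of a spray `G`. -/
noncomputable def Nspray (G : Fin n → (Fin n → ℝ) → (Fin n → ℝ) → ℝ) (i j : Fin n) :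
    (Fin n → ℝ) → (Fin n → ℝ) → ℝ :=
  pdy (G i) j

/-- Berwald connection coefficients `G^i_{jk} = ∂²G^i/∂y^j∂y^k`. -/
noncomputable def Gconn (G : Fin n → (Fin n → ℝ) → (Fin n → ℝ) → ℝ) (i j k : Fin n) :
    (Fin n → ℝ) → (Fin n → ℝ) → ℝ :=
  pdy (Nspray G i j) k

/-- Contortion vector `B^i = -(α/2) ‖y‖ F^i_j y^j`. -/
noncomputable def Bvec (g ginv : Fin n → Fin n → (Fin n → ℝ) → ℝ)
    (Fl : Fin n → Fin n → (Fin n → ℝ) → ℝ) (α : ℝ) (i : Fin n) (x y : Fin n → ℝ) : ℝ :=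
  -(α / 2) * nrm g x y * ∑ j, (∑ h, ginv i h x * Fl h j x) * y j

open Finset

namespace RandersProof

variable {n : ℕ}

lemma hasFDerivAt_coord (y : Fin n → ℝ) (a : Fin n) :
    HasFDerivAt (fun y' : Fin n → ℝ => y' a)
      (ContinuousLinearMap.proj a : (Fin n → ℝ) →L[ℝ] ℝ) y :=
  (ContinuousLinearMap.proj a : (Fin n → ℝ) →L[ℝ] ℝ).hasFDerivAt

lemma hasFDerivAt_Qf (g : Fin n → Fin n → (Fin n → ℝ) → ℝ) (x y : Fin n → ℝ) :
    HasFDerivAt (fun y' => Qf g x y')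
      (∑ a : Fin n, ∑ b : Fin n,
        ((g a b x * y a) • (ContinuousLinearMap.proj b : (Fin n → ℝ) →L[ℝ] ℝ)
          + y b • (g a b x • (ContinuousLinearMap.proj a : (Fin n → ℝ) →L[ℝ] ℝ)))) y := by
  unfold Qf
  apply HasFDerivAt.fun_sum
  intro a _
  apply HasFDerivAt.fun_sum
  intro b _
  exact ((hasFDerivAt_coord y a).const_mul (g a b x)).mul (hasFDerivAt_coord y b)

lemma pdy_Qf (g : Fin n → Fin n → (Fin n → ℝ) → ℝ)
    (hgsymm : ∀ i j x, g i j x = g j i x) (x y : Fin n → ℝ) (j : Fin n) :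
    pdy (Qf g) j x y = 2 * ∑ k, g j k x * y k := by
  have h := (hasFDerivAt_Qf g x y).fderiv
  show fderiv ℝ (Qf g x) y (Pi.single j 1) = _
  rw [show (Qf g x) = (fun y' => Qf g x y') from rfl, h]
  simp [ContinuousLinearMap.sum_apply, ContinuousLinearMap.add_apply,
    ContinuousLinearMap.smul_apply, ContinuousLinearMap.proj_apply, Pi.single_apply,
    mul_ite, Finset.sum_ite_eq', Finset.mem_univ]
  simp only [Finset.sum_add_distrib]
  have h1 : (∑ a : Fin n, ∑ b : Fin n, (if b = j then g a b x * y a else 0))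
      = ∑ k, g j k x * y k := by
    simp only [Finset.sum_ite_eq', Finset.mem_univ, if_true]
    exact Finset.sum_congr rfl fun k _ => by rw [hgsymm]
  have h2 : (∑ a : Fin n, ∑ b : Fin n, (if a = j then y b * g a b x else 0))
      = ∑ k, g j k x * y k := by
    rw [Finset.sum_comm]
    simp only [Finset.sum_ite_eq', Finset.mem_univ, if_true]
    exact Finset.sum_congr rfl fun k _ => by ring
  rw [h1, h2]; ring



noncomputable def LQ (g : Fin n → Fin n → (Fin n → ℝ) → ℝ) (x y : Fin n → ℝ) :
    (Fin n → ℝ) →L[ℝ] ℝ :=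
  ∑ a : Fin n, ∑ b : Fin n,
    ((g a b x * y a) • (ContinuousLinearMap.proj b : (Fin n → ℝ) →L[ℝ] ℝ)
      + y b • (g a b x • (ContinuousLinearMap.proj a : (Fin n → ℝ) →L[ℝ] ℝ)))

noncomputable def LS (g : Fin n → Fin n → (Fin n → ℝ) → ℝ) (i : Fin n) (x : Fin n → ℝ) :
    (Fin n → ℝ) →L[ℝ] ℝ :=
  ∑ k : Fin n, g i k x • (ContinuousLinearMap.proj k : (Fin n → ℝ) →L[ℝ] ℝ)

noncomputable def Lnrm (g : Fin n → Fin n → (Fin n → ℝ) → ℝ) (x y : Fin n → ℝ) :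
    (Fin n → ℝ) →L[ℝ] ℝ :=
  (1 / (2 * nrm g x y)) • LQ g x y

noncomputable def Llf (g : Fin n → Fin n → (Fin n → ℝ) → ℝ) (i : Fin n) (x y : Fin n → ℝ) :
    (Fin n → ℝ) →L[ℝ] ℝ :=
  (∑ k, g i k x * y k) • ((-(nrm g x y ^ 2)⁻¹) • Lnrm g x y) + (nrm g x y)⁻¹ • LS g i x

lemma hasFDerivAt_Qf' (g : Fin n → Fin n → (Fin n → ℝ) → ℝ) (x y : Fin n → ℝ) :
    HasFDerivAt (fun y' => Qf g x y') (LQ g x y) y := hasFDerivAt_Qf g x y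

lemma hasFDerivAt_S (g : Fin n → Fin n → (Fin n → ℝ) → ℝ) (i : Fin n) (x y : Fin n → ℝ) :
    HasFDerivAt (fun y' => ∑ k, g i k x * y' k) (LS g i x) y :=
  HasFDerivAt.fun_sum fun k _ => (hasFDerivAt_coord y k).const_mul _

lemma nrm_pos (g : Fin n → Fin n → (Fin n → ℝ) → ℝ) {x y : Fin n → ℝ} (hQ : 0 < Qf g x y) :
    0 < nrm g x y := Real.sqrt_pos.2 hQ

lemma nrm_sq (g : Fin n → Fin n → (Fin n → ℝ) → ℝ) {x y : Fin n → ℝ} (hQ : 0 < Qf g x y) :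
    nrm g x y ^ 2 = Qf g x y := Real.sq_sqrt hQ.le

lemma hasFDerivAt_nrm (g : Fin n → Fin n → (Fin n → ℝ) → ℝ) {x y : Fin n → ℝ}
    (hQ : 0 < Qf g x y) :
    HasFDerivAt (fun y' => nrm g x y') (Lnrm g x y) y :=
  (Real.hasDerivAt_sqrt hQ.ne').comp_hasFDerivAt y (hasFDerivAt_Qf' g x y)

lemma hasFDerivAt_lf (g : Fin n → Fin n → (Fin n → ℝ) → ℝ) (i : Fin n) {x y : Fin n → ℝ}
    (hQ : 0 < Qf g x y) :
    HasFDerivAt (fun y' => lf g i x y') (Llf g i x y) y := by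
  have h := (hasFDerivAt_S g i x y).fun_mul
    ((hasDerivAt_inv (nrm_pos g hQ).ne').comp_hasFDerivAt y (hasFDerivAt_nrm g hQ))
  simpa only [lf, div_eq_mul_inv, Llf, Function.comp_apply] using h

lemma LQ_single (g : Fin n → Fin n → (Fin n → ℝ) → ℝ)
    (hgsymm : ∀ i j x, g i j x = g j i x) (x y : Fin n → ℝ) (j : Fin n) :
    LQ g x y (Pi.single j 1) = 2 * ∑ k, g j k x * y k := by
  rw [show LQ g x y (Pi.single j 1) = pdy (Qf g) j x y by
    show _ = fderiv ℝ (Qf g x) y (Pi.single j 1)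
    rw [show (Qf g x) = (fun y' => Qf g x y') from rfl, (hasFDerivAt_Qf' g x y).fderiv]]
  exact pdy_Qf g hgsymm x y j

lemma LS_single (g : Fin n → Fin n → (Fin n → ℝ) → ℝ) (i : Fin n) (x : Fin n → ℝ) (j : Fin n) :
    LS g i x (Pi.single j 1) = g i j x := by
  simp [LS, ContinuousLinearMap.sum_apply, ContinuousLinearMap.smul_apply,
    ContinuousLinearMap.proj_apply, Pi.single_apply, mul_ite, Finset.sum_ite_eq',
    Finset.mem_univ]

lemma Lnrm_single (g : Fin n → Fin n → (Fin n → ℝ) → ℝ)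
    (hgsymm : ∀ i j x, g i j x = g j i x) {x y : Fin n → ℝ} (hQ : 0 < Qf g x y) (j : Fin n) :
    Lnrm g x y (Pi.single j 1) = (∑ k, g j k x * y k) / nrm g x y := by
  have hu := (nrm_pos g hQ).ne'
  rw [Lnrm, ContinuousLinearMap.smul_apply, LQ_single g hgsymm x y j]
  field_simp
  rw [smul_eq_mul]
  field_simp

lemma pdy_nrm (g : Fin n → Fin n → (Fin n → ℝ) → ℝ)
    (hgsymm : ∀ i j x, g i j x = g j i x) {x y : Fin n → ℝ} (hQ : 0 < Qf g x y) (j : Fin n) :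
    pdy (nrm g) j x y = (∑ k, g j k x * y k) / nrm g x y := by
  rw [show pdy (nrm g) j x y = Lnrm g x y (Pi.single j 1) by
    show fderiv ℝ (nrm g x) y (Pi.single j 1) = _
    rw [show (nrm g x) = (fun y' => nrm g x y') from rfl, (hasFDerivAt_nrm g hQ).fderiv]]
  exact Lnrm_single g hgsymm hQ j

lemma pdy_lf (g : Fin n → Fin n → (Fin n → ℝ) → ℝ)
    (hgsymm : ∀ i j x, g i j x = g j i x) (i : Fin n) {x y : Fin n → ℝ}
    (hQ : 0 < Qf g x y) (j : Fin n) :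
    pdy (fun x' y' => lf g i x' y') j x y
      = g i j x / nrm g x y
        - (∑ k, g i k x * y k) * (∑ k, g j k x * y k) / (nrm g x y) ^ 3 := by
  have hu := (nrm_pos g hQ).ne'
  rw [show pdy (fun x' y' => lf g i x' y') j x y = Llf g i x y (Pi.single j 1) by
    show fderiv ℝ (fun y' => lf g i x y') y (Pi.single j 1) = _
    rw [(hasFDerivAt_lf g i hQ).fderiv]]
  rw [Llf]
  simp only [ContinuousLinearMap.smul_apply, ContinuousLinearMap.add_apply,
    LS_single, Lnrm_single g hgsymm hQ]
  have hu2 : nrm g x y ^ 2 ≠ 0 := pow_ne_zero _ hu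
  field_simp
  have e : nrm g x y * (nrm g x y)⁻¹ = 1 := mul_inv_cancel₀ hu
  linear_combination (-((∑ k, g j k x * y k) * (∑ k, g i k x * y k))
    * (nrm g x y ^ 2 * (nrm g x y)⁻¹ ^ 2 + nrm g x y * (nrm g x y)⁻¹ + 1)
    + g i j x * nrm g x y ^ 2) * e

section XDeriv

variable (g : Fin n → Fin n → (Fin n → ℝ) → ℝ)

noncomputable def MQ (x y : Fin n → ℝ) : (Fin n → ℝ) →L[ℝ] ℝ :=
  ∑ a : Fin n, ∑ b : Fin n, y b • (y a • fderiv ℝ (g a b) x)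

noncomputable def MS (i : Fin n) (x y : Fin n → ℝ) : (Fin n → ℝ) →L[ℝ] ℝ :=
  ∑ k : Fin n, y k • fderiv ℝ (g i k) x

noncomputable def Mnrm (x y : Fin n → ℝ) : (Fin n → ℝ) →L[ℝ] ℝ :=
  (1 / (2 * nrm g x y)) • MQ g x y

noncomputable def Mlf (i : Fin n) (x y : Fin n → ℝ) : (Fin n → ℝ) →L[ℝ] ℝ :=
  (∑ k, g i k x * y k) • ((-(nrm g x y ^ 2)⁻¹) • Mnrm g x y) + (nrm g x y)⁻¹ • MS g i x y

lemma hasFDerivAt_g (hg : ∀ i j, ContDiff ℝ (⊤ : ℕ∞) (g i j)) (a b : Fin n) (x : Fin n → ℝ) :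
    HasFDerivAt (g a b) (fderiv ℝ (g a b) x) x :=
  (((hg a b).differentiable (by simp)) x).hasFDerivAt

lemma hasFDerivAt_Qf_x (hg : ∀ i j, ContDiff ℝ (⊤ : ℕ∞) (g i j)) (x y : Fin n → ℝ) :
    HasFDerivAt (fun x' => Qf g x' y) (MQ g x y) x := by
  unfold Qf MQ
  apply HasFDerivAt.fun_sum; intro a _
  apply HasFDerivAt.fun_sum; intro b _
  exact ((hasFDerivAt_g g hg a b x).mul_const (y a)).mul_const (y b)

lemma hasFDerivAt_S_x (hg : ∀ i j, ContDiff ℝ (⊤ : ℕ∞) (g i j)) (i : Fin n) (x y : Fin n → ℝ) :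
    HasFDerivAt (fun x' => ∑ k, g i k x' * y k) (MS g i x y) x :=
  HasFDerivAt.fun_sum fun k _ => (hasFDerivAt_g g hg i k x).mul_const (y k)

lemma hasFDerivAt_nrm_x (hg : ∀ i j, ContDiff ℝ (⊤ : ℕ∞) (g i j)) {x y : Fin n → ℝ} (hQ : 0 < Qf g x y) :
    HasFDerivAt (fun x' => nrm g x' y) (Mnrm g x y) x :=
  (Real.hasDerivAt_sqrt hQ.ne').comp_hasFDerivAt x (hasFDerivAt_Qf_x g hg x y)

lemma hasFDerivAt_lf_x (hg : ∀ i j, ContDiff ℝ (⊤ : ℕ∞) (g i j)) (i : Fin n) {x y : Fin n → ℝ} (hQ : 0 < Qf g x y) :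
    HasFDerivAt (fun x' => lf g i x' y) (Mlf g i x y) x := by
  have h := (hasFDerivAt_S_x g hg i x y).fun_mul
    ((hasDerivAt_inv (nrm_pos g hQ).ne').comp_hasFDerivAt x (hasFDerivAt_nrm_x g hg hQ))
  simpa only [lf, div_eq_mul_inv, Mlf, Function.comp_apply] using h

lemma MQ_single (x y : Fin n → ℝ) (j : Fin n) :
    MQ g x y (Pi.single j 1) = ∑ a, ∑ b, pd (g a b) j x * y a * y b := by
  unfold MQ pd
  simp only [ContinuousLinearMap.sum_apply, ContinuousLinearMap.smul_apply, smul_eq_mul]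
  exact Finset.sum_congr rfl fun a _ => Finset.sum_congr rfl fun b _ => by ring

lemma MS_single (i : Fin n) (x y : Fin n → ℝ) (j : Fin n) :
    MS g i x y (Pi.single j 1) = ∑ k, pd (g i k) j x * y k := by
  unfold MS pd
  simp only [ContinuousLinearMap.sum_apply, ContinuousLinearMap.smul_apply, smul_eq_mul]
  exact Finset.sum_congr rfl fun k _ => by ring

lemma pdx_lf (hg : ∀ i j, ContDiff ℝ (⊤ : ℕ∞) (g i j)) (i : Fin n) {x y : Fin n → ℝ} (hQ : 0 < Qf g x y) (j : Fin n) :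
    pdx (fun x' y' => lf g i x' y') j x y
      = (∑ k, pd (g i k) j x * y k) / nrm g x y
        - (∑ k, g i k x * y k) * (∑ a, ∑ b, pd (g a b) j x * y a * y b)
            / (2 * nrm g x y ^ 3) := by
  have hu := (nrm_pos g hQ).ne'
  rw [show pdx (fun x' y' => lf g i x' y') j x y = Mlf g i x y (Pi.single j 1) by
    show fderiv ℝ (fun x' => lf g i x' y) x (Pi.single j 1) = _
    rw [(hasFDerivAt_lf_x g hg i hQ).fderiv]]
  rw [Mlf]
  simp only [ContinuousLinearMap.smul_apply, ContinuousLinearMap.add_apply, smul_eq_mul,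
    MS_single, Mnrm, MQ_single]
  have hu2 : nrm g x y ^ 2 ≠ 0 := pow_ne_zero _ hu
  field_simp
  ring

end XDeriv

section Spray

variable (g ginv : Fin n → Fin n → (Fin n → ℝ) → ℝ) (A : Fin n → (Fin n → ℝ) → ℝ)

noncomputable def Lquad (c : Fin n → Fin n → ℝ) (y : Fin n → ℝ) : (Fin n → ℝ) →L[ℝ] ℝ :=
  ∑ a : Fin n, ∑ b : Fin n,
    ((c a b * y a) • (ContinuousLinearMap.proj b : (Fin n → ℝ) →L[ℝ] ℝ)
      + y b • (c a b • (ContinuousLinearMap.proj a : (Fin n → ℝ) →L[ℝ] ℝ)))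

noncomputable def Llin (c : Fin n → ℝ) : (Fin n → ℝ) →L[ℝ] ℝ :=
  ∑ k : Fin n, c k • (ContinuousLinearMap.proj k : (Fin n → ℝ) →L[ℝ] ℝ)

lemma hasFDerivAt_quad (c : Fin n → Fin n → ℝ) (y : Fin n → ℝ) :
    HasFDerivAt (fun y' => ∑ a, ∑ b, c a b * y' a * y' b) (Lquad c y) y := by
  apply HasFDerivAt.fun_sum; intro a _
  apply HasFDerivAt.fun_sum; intro b _
  exact ((hasFDerivAt_coord y a).const_mul (c a b)).mul (hasFDerivAt_coord y b)

lemma hasFDerivAt_lin (c : Fin n → ℝ) (y : Fin n → ℝ) :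
    HasFDerivAt (fun y' => ∑ k, c k * y' k) (Llin c) y :=
  HasFDerivAt.fun_sum fun k _ => (hasFDerivAt_coord y k).const_mul _

lemma Llin_single (c : Fin n → ℝ) (j : Fin n) : Llin c (Pi.single j 1) = c j := by
  simp [Llin, ContinuousLinearMap.sum_apply, ContinuousLinearMap.smul_apply,
    ContinuousLinearMap.proj_apply, Pi.single_apply, mul_ite, Finset.sum_ite_eq',
    Finset.mem_univ]

lemma Lquad_single (c : Fin n → Fin n → ℝ) (hc : ∀ a b, c a b = c b a) (y : Fin n → ℝ)
    (j : Fin n) :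
    Lquad c y (Pi.single j 1) = 2 * ∑ k, c j k * y k := by
  simp only [Lquad, ContinuousLinearMap.sum_apply, ContinuousLinearMap.add_apply,
    ContinuousLinearMap.smul_apply, ContinuousLinearMap.proj_apply, Pi.single_apply,
    smul_eq_mul, mul_ite, mul_one, mul_zero]
  simp only [Finset.sum_add_distrib]
  have h1 : (∑ a : Fin n, ∑ b : Fin n, (if b = j then c a b * y a else 0))
      = ∑ k, c j k * y k := by
    simp only [Finset.sum_ite_eq', Finset.mem_univ, if_true]
    exact Finset.sum_congr rfl fun k _ => by rw [hc]
  have h2 : (∑ a : Fin n, ∑ b : Fin n, (if a = j then y b * c a b else 0))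
      = ∑ k, c j k * y k := by
    rw [Finset.sum_comm]
    simp only [Finset.sum_ite_eq', Finset.mem_univ, if_true]
    exact Finset.sum_congr rfl fun k _ => by ring
  rw [h1, h2]; ring

lemma pd_symm (hgsymm : ∀ i j x, g i j x = g j i x) (a b j : Fin n) :
    pd (g a b) j = pd (g b a) j := by
  rw [show g a b = g b a from funext fun x => hgsymm a b x]

lemma christoffel_symm (hgsymm : ∀ i j x, g i j x = g j i x) (i j k : Fin n) (x : Fin n → ℝ) :
    christoffel g ginv i j k x = christoffel g ginv i k j x := by
  unfold christoffel
  congr 1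
  apply Finset.sum_congr rfl
  intro h _
  rw [pd_symm g hgsymm j k]
  ring

/-- Derivative CLM of the Randers spray in the fiber variable. -/
noncomputable def LGs (α : ℝ) (m : Fin n) (x y : Fin n → ℝ) : (Fin n → ℝ) →L[ℝ] ℝ :=
  (1 / 2 : ℝ) • Lquad (fun a b => christoffel g ginv m a b x) y
    - (((α / 2) * nrm g x y) • Llin (fun l => ∑ h, ginv m h x * Fform A h l x)
        + (∑ l, (∑ h, ginv m h x * Fform A h l x) * y l) • ((α / 2) • Lnrm g x y))

lemma hasFDerivAt_Gspray (α : ℝ) (m : Fin n) {x y : Fin n → ℝ} (hQ : 0 < Qf g x y) :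
    HasFDerivAt (fun y' => Gspray g ginv A α m x y') (LGs g ginv A α m x y) y := by
  unfold Gspray GsprayF LGs
  exact ((hasFDerivAt_quad _ y).const_mul (1 / 2)).sub
    (((hasFDerivAt_nrm g hQ).const_mul (α / 2)).mul (hasFDerivAt_lin _ y))

lemma Nspray_eq (hgsymm : ∀ i j x, g i j x = g j i x) (α : ℝ) (m j : Fin n)
    {x y : Fin n → ℝ} (hQ : 0 < Qf g x y) :
    Nspray (Gspray g ginv A α) m j x y
      = ∑ k, christoffel g ginv m j k x * y k
        - (α / 2) * (lf g j x y * (∑ l, (∑ h, ginv m h x * Fform A h l x) * y l)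
            + nrm g x y * (∑ h, ginv m h x * Fform A h j x)) := by
  rw [show Nspray (Gspray g ginv A α) m j x y = LGs g ginv A α m x y (Pi.single j 1) by
    show fderiv ℝ (Gspray g ginv A α m x) y (Pi.single j 1) = _
    rw [show (Gspray g ginv A α m x) = (fun y' => Gspray g ginv A α m x y') from rfl,
      (hasFDerivAt_Gspray g ginv A α m hQ).fderiv]]
  rw [LGs]
  simp only [ContinuousLinearMap.sub_apply, ContinuousLinearMap.add_apply,
    ContinuousLinearMap.smul_apply, smul_eq_mul,
    Lquad_single _ (fun a b => christoffel_symm g ginv hgsymm m a b x) y j,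
    Llin_single, Lnrm_single g hgsymm hQ]
  unfold lf
  ring

end Spray

section Conn

variable (g ginv : Fin n → Fin n → (Fin n → ℝ) → ℝ) (A : Fin n → (Fin n → ℝ) → ℝ)

lemma Llf_single (hgsymm : ∀ i j x, g i j x = g j i x) (i : Fin n) {x y : Fin n → ℝ}
    (hQ : 0 < Qf g x y) (j : Fin n) :
    Llf g i x y (Pi.single j 1)
      = g i j x / nrm g x y
        - (∑ k, g i k x * y k) * (∑ k, g j k x * y k) / (nrm g x y) ^ 3 := by
  rw [show Llf g i x y (Pi.single j 1) = pdy (fun x' y' => lf g i x' y') j x y by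
    show _ = fderiv ℝ (fun y' => lf g i x y') y (Pi.single j 1)
    rw [(hasFDerivAt_lf g i hQ).fderiv]]
  exact pdy_lf g hgsymm i hQ j

lemma continuous_Qf_y (x : Fin n → ℝ) : Continuous (fun y' => Qf g x y') := by
  unfold Qf
  exact continuous_finset_sum _ fun i _ => continuous_finset_sum _ fun j _ =>
    (continuous_const.mul (continuous_apply i)).mul (continuous_apply j)

noncomputable def LN (α : ℝ) (k i : Fin n) (x y : Fin n → ℝ) : (Fin n → ℝ) →L[ℝ] ℝ :=
  Llin (fun m => christoffel g ginv k i m x)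
    - (α / 2) • ((lf g i x y • Llin (fun l => ∑ h, ginv k h x * Fform A h l x)
        + (∑ l, (∑ h, ginv k h x * Fform A h l x) * y l) • Llf g i x y)
      + (∑ h, ginv k h x * Fform A h i x) • Lnrm g x y)

lemma hasFDerivAt_Nhat (α : ℝ) (k i : Fin n) {x y : Fin n → ℝ} (hQ : 0 < Qf g x y) :
    HasFDerivAt (fun y' =>
        ∑ m, christoffel g ginv k i m x * y' m
          - (α / 2) * (lf g i x y' * (∑ l, (∑ h, ginv k h x * Fform A h l x) * y' l)
              + nrm g x y' * (∑ h, ginv k h x * Fform A h i x)))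
      (LN g ginv A α k i x y) y := by
  unfold LN
  exact (hasFDerivAt_lin _ y).sub
    ((((hasFDerivAt_lf g i hQ).mul (hasFDerivAt_lin _ y)).add
      ((hasFDerivAt_nrm g hQ).mul_const _)).const_mul (α / 2))

lemma Gconn_eq (hgsymm : ∀ i j x, g i j x = g j i x) (α : ℝ) (k i j : Fin n)
    {x y : Fin n → ℝ} (hQ : 0 < Qf g x y) :
    Gconn (Gspray g ginv A α) k i j x y
      = christoffel g ginv k i j x
        - (α / 2) * (lf g i x y * (∑ h, ginv k h x * Fform A h j x)
            + (∑ l, (∑ h, ginv k h x * Fform A h l x) * y l)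
                * (g i j x / nrm g x y
                    - (∑ a, g i a x * y a) * (∑ b, g j b x * y b) / nrm g x y ^ 3)
            + (∑ h, ginv k h x * Fform A h i x) * ((∑ b, g j b x * y b) / nrm g x y)) := by
  have hopen : IsOpen {y' : Fin n → ℝ | 0 < Qf g x y'} :=
    isOpen_lt continuous_const (continuous_Qf_y g x)
  have hev : (Nspray (Gspray g ginv A α) k i x) =ᶠ[nhds y]
      (fun y' => ∑ m, christoffel g ginv k i m x * y' m
          - (α / 2) * (lf g i x y' * (∑ l, (∑ h, ginv k h x * Fform A h l x) * y' l)
              + nrm g x y' * (∑ h, ginv k h x * Fform A h i x))) := by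
    filter_upwards [hopen.mem_nhds hQ] with y' hy'
    exact Nspray_eq g ginv A hgsymm α k i hy'
  have h0 : Gconn (Gspray g ginv A α) k i j x y
      = LN g ginv A α k i x y (Pi.single j 1) := by
    show fderiv ℝ (Nspray (Gspray g ginv A α) k i x) y (Pi.single j 1) = _
    rw [Filter.EventuallyEq.fderiv_eq hev, (hasFDerivAt_Nhat g ginv A α k i hQ).fderiv]
  rw [h0, LN]
  simp only [ContinuousLinearMap.sub_apply, ContinuousLinearMap.add_apply,
    ContinuousLinearMap.smul_apply, smul_eq_mul, Llin_single,
    Llf_single g hgsymm i hQ, Lnrm_single g hgsymm hQ]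

end Conn

section Alg

variable (g ginv : Fin n → Fin n → (Fin n → ℝ) → ℝ) (A : Fin n → (Fin n → ℝ) → ℝ)

noncomputable def lowG (i j k : Fin n) (x : Fin n → ℝ) : ℝ :=
  (1 / 2) * (pd (g i j) k x + pd (g i k) j x - pd (g j k) i x)

lemma ginv_right (x : Fin n → ℝ)
    (hinv : ∀ i j, (∑ h, ginv i h x * g h j x) = if i = j then (1 : ℝ) else 0) :
    ∀ i j, (∑ h, g i h x * ginv h j x) = if i = j then (1 : ℝ) else 0 := by
  have hMN : (Matrix.of fun a b => ginv a b x) * (Matrix.of fun a b => g a b x) = 1 := by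
    ext a b
    rw [Matrix.mul_apply]
    simpa [Matrix.one_apply] using hinv a b
  have hNM := mul_eq_one_comm.mp hMN
  intro i j
  have := congrArg (fun M => M i j) hNM
  simpa [Matrix.mul_apply, Matrix.one_apply] using this

lemma g_mul_christoffel (x : Fin n → ℝ)
    (hinv : ∀ i j, (∑ h, ginv i h x * g h j x) = if i = j then (1 : ℝ) else 0)
    (i j k : Fin n) :
    (∑ m, g i m x * christoffel g ginv m j k x) = lowG g i j k x := by
  have hgr := ginv_right g ginv x hinv
  unfold christoffel lowG
  calc (∑ m, g i m x * ((1 / 2) * ∑ h, ginv m h x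
          * (pd (g h j) k x + pd (g h k) j x - pd (g j k) h x)))
      = ∑ m, ∑ h, (g i m x * ginv m h x)
          * ((1 / 2) * (pd (g h j) k x + pd (g h k) j x - pd (g j k) h x)) := by
        refine Finset.sum_congr rfl fun m _ => ?_
        rw [Finset.mul_sum]
        rw [Finset.mul_sum]
        exact Finset.sum_congr rfl fun h _ => by ring
    _ = ∑ h, (∑ m, g i m x * ginv m h x)
          * ((1 / 2) * (pd (g h j) k x + pd (g h k) j x - pd (g j k) h x)) := by
        rw [Finset.sum_comm]
        exact Finset.sum_congr rfl fun h _ => (Finset.sum_mul _ _ _).symm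
    _ = _ := by
        simp only [hgr]
        simp [Finset.sum_ite_eq', Finset.mem_univ, ite_mul, zero_mul]

lemma pd_g_low (hgsymm : ∀ i j x, g i j x = g j i x) (i k j : Fin n) (x : Fin n → ℝ) :
    pd (g i k) j x = lowG g k j i x + lowG g i j k x := by
  unfold lowG
  rw [pd_symm g hgsymm k j, pd_symm g hgsymm k i, pd_symm g hgsymm j i]
  ring

lemma lowG_symm (hgsymm : ∀ i j x, g i j x = g j i x) (a i j : Fin n) (x : Fin n → ℝ) :
    lowG g a j i x = lowG g a i j x := by
  unfold lowG
  rw [pd_symm g hgsymm j i]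
  ring

end Alg

section Contr

variable (g ginv : Fin n → Fin n → (Fin n → ℝ) → ℝ) (A : Fin n → (Fin n → ℝ) → ℝ)
variable (x y : Fin n → ℝ)

lemma Fform_anti (i j : Fin n) : Fform A i j x = -Fform A j i x := by
  unfold Fform; ring

lemma contr_Fup_g
    (hinv : ∀ i j, (∑ h, ginv i h x * g h j x) = if i = j then (1 : ℝ) else 0)
    (i l : Fin n) :
    (∑ m, (∑ h, ginv m h x * Fform A h l x) * g i m x) = Fform A i l x := by
  have hgr := ginv_right g ginv x hinv
  calc (∑ m, (∑ h, ginv m h x * Fform A h l x) * g i m x)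
      = ∑ m, ∑ h, (g i m x * ginv m h x) * Fform A h l x := by
        refine Finset.sum_congr rfl fun m _ => ?_
        rw [Finset.sum_mul]
        exact Finset.sum_congr rfl fun h _ => by ring
    _ = ∑ h, (∑ m, g i m x * ginv m h x) * Fform A h l x := by
        rw [Finset.sum_comm]
        exact Finset.sum_congr rfl fun h _ => (Finset.sum_mul _ _ _).symm
    _ = Fform A i l x := by
        simp only [hgr]
        simp [Finset.sum_ite_eq', Finset.mem_univ, ite_mul, zero_mul]

lemma contr_Fup_S
    (hgsymm : ∀ i j x, g i j x = g j i x)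
    (hinv : ∀ i j, (∑ h, ginv i h x * g h j x) = if i = j then (1 : ℝ) else 0)
    (l : Fin n) :
    (∑ m, (∑ h, ginv m h x * Fform A h l x) * (∑ k, g m k x * y k))
      = ∑ k, Fform A k l x * y k := by
  calc (∑ m, (∑ h, ginv m h x * Fform A h l x) * (∑ k, g m k x * y k))
      = ∑ m, ∑ k, ((∑ h, ginv m h x * Fform A h l x) * g k m x) * y k := by
        refine Finset.sum_congr rfl fun m _ => ?_
        rw [Finset.mul_sum]
        exact Finset.sum_congr rfl fun k _ => by rw [hgsymm m k]; ring
    _ = ∑ k, (∑ m, (∑ h, ginv m h x * Fform A h l x) * g k m x) * y k := by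
        rw [Finset.sum_comm]
        exact Finset.sum_congr rfl fun k _ => (Finset.sum_mul _ _ _).symm
    _ = ∑ k, Fform A k l x * y k := by
        exact Finset.sum_congr rfl fun k _ => by rw [contr_Fup_g g ginv A x hinv k l]

lemma contr_W_y :
    (∑ l, (∑ k, Fform A k l x * y k) * y l) = 0 := by
  have h2 : (∑ l, (∑ k, Fform A k l x * y k) * y l)
      = - ∑ l, (∑ k, Fform A k l x * y k) * y l := by
    calc (∑ l, (∑ k, Fform A k l x * y k) * y l)
        = ∑ l, ∑ k, Fform A k l x * y k * y l := by
          exact Finset.sum_congr rfl fun l _ => Finset.sum_mul _ _ _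
      _ = ∑ k, ∑ l, Fform A k l x * y k * y l := Finset.sum_comm
      _ = ∑ k, ∑ l, -(Fform A l k x * y l * y k) := by
          refine Finset.sum_congr rfl fun k _ => Finset.sum_congr rfl fun l _ => ?_
          rw [Fform_anti A x k l]; ring
      _ = - ∑ k, ∑ l, Fform A l k x * y l * y k := by
          simp [Finset.sum_neg_distrib]
      _ = - ∑ l, (∑ k, Fform A k l x * y k) * y l := by
          congr 1
          exact Finset.sum_congr rfl fun k _ => (Finset.sum_mul _ _ _).symm
  linarith

lemma contr_gamma_g
    (hinv : ∀ i j, (∑ h, ginv i h x * g h j x) = if i = j then (1 : ℝ) else 0)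
    (i j : Fin n) :
    (∑ m, (∑ t, christoffel g ginv m j t x * y t) * g i m x)
      = ∑ t, lowG g i j t x * y t := by
  calc (∑ m, (∑ t, christoffel g ginv m j t x * y t) * g i m x)
      = ∑ m, ∑ t, (g i m x * christoffel g ginv m j t x) * y t := by
        refine Finset.sum_congr rfl fun m _ => ?_
        rw [Finset.sum_mul]
        exact Finset.sum_congr rfl fun t _ => by ring
    _ = ∑ t, (∑ m, g i m x * christoffel g ginv m j t x) * y t := by
        rw [Finset.sum_comm]
        exact Finset.sum_congr rfl fun t _ => (Finset.sum_mul _ _ _).symm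
    _ = ∑ t, lowG g i j t x * y t := by
        exact Finset.sum_congr rfl fun t _ => by
          rw [g_mul_christoffel g ginv x hinv i j t]

lemma contr_gamma_S
    (hgsymm : ∀ i j x, g i j x = g j i x)
    (hinv : ∀ i j, (∑ h, ginv i h x * g h j x) = if i = j then (1 : ℝ) else 0)
    (j : Fin n) :
    (∑ m, (∑ t, christoffel g ginv m j t x * y t) * (∑ k, g m k x * y k))
      = ∑ a, ∑ b, lowG g a j b x * y a * y b := by
  calc (∑ m, (∑ t, christoffel g ginv m j t x * y t) * (∑ k, g m k x * y k))
      = ∑ m, ∑ k, ((∑ t, christoffel g ginv m j t x * y t) * g k m x) * y k := by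
        refine Finset.sum_congr rfl fun m _ => ?_
        rw [Finset.mul_sum]
        exact Finset.sum_congr rfl fun k _ => by rw [hgsymm m k]; ring
    _ = ∑ k, (∑ m, (∑ t, christoffel g ginv m j t x * y t) * g k m x) * y k := by
        rw [Finset.sum_comm]
        exact Finset.sum_congr rfl fun k _ => (Finset.sum_mul _ _ _).symm
    _ = ∑ k, (∑ t, lowG g k j t x * y t) * y k := by
        exact Finset.sum_congr rfl fun k _ => by
          rw [contr_gamma_g g ginv x y hinv k j]
    _ = ∑ a, ∑ b, lowG g a j b x * y a * y b := by
        refine Finset.sum_congr rfl fun a _ => ?_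
        rw [Finset.sum_mul]
        exact Finset.sum_congr rfl fun b _ => by ring

lemma contr_gammac_S
    (hgsymm : ∀ i j x, g i j x = g j i x)
    (hinv : ∀ i j, (∑ h, ginv i h x * g h j x) = if i = j then (1 : ℝ) else 0)
    (i j : Fin n) :
    (∑ k, christoffel g ginv k i j x * (∑ b, g k b x * y b))
      = ∑ p, lowG g p i j x * y p := by
  calc (∑ k, christoffel g ginv k i j x * (∑ b, g k b x * y b))
      = ∑ k, ∑ b, (g b k x * christoffel g ginv k i j x) * y b := by
        refine Finset.sum_congr rfl fun k _ => ?_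
        rw [Finset.mul_sum]
        exact Finset.sum_congr rfl fun b _ => by rw [hgsymm k b]; ring
    _ = ∑ b, (∑ k, g b k x * christoffel g ginv k i j x) * y b := by
        rw [Finset.sum_comm]
        exact Finset.sum_congr rfl fun b _ => (Finset.sum_mul _ _ _).symm
    _ = ∑ p, lowG g p i j x * y p := by
        exact Finset.sum_congr rfl fun p _ => by
          rw [g_mul_christoffel g ginv x hinv p i j]

lemma contr_pdx_S (hgsymm : ∀ i j x, g i j x = g j i x) (i j : Fin n) :
    (∑ k, pd (g i k) j x * y k)
      = (∑ p, lowG g p i j x * y p) + ∑ t, lowG g i j t x * y t := by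
  calc (∑ k, pd (g i k) j x * y k)
      = ∑ k, (lowG g k j i x * y k + lowG g i j k x * y k) := by
        refine Finset.sum_congr rfl fun k _ => ?_
        rw [pd_g_low g hgsymm i k j]; ring
    _ = (∑ k, lowG g k j i x * y k) + ∑ k, lowG g i j k x * y k :=
        Finset.sum_add_distrib
    _ = _ := by
        congr 1
        exact Finset.sum_congr rfl fun k _ => by rw [lowG_symm g hgsymm k j i]

lemma contr_P (hgsymm : ∀ i j x, g i j x = g j i x) (j : Fin n) :
    (∑ a, ∑ b, pd (g a b) j x * y a * y b)
      = 2 * ∑ a, ∑ b, lowG g a j b x * y a * y b := by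
  calc (∑ a, ∑ b, pd (g a b) j x * y a * y b)
      = ∑ a, ∑ b, (lowG g b j a x * y a * y b + lowG g a j b x * y a * y b) := by
        refine Finset.sum_congr rfl fun a _ => Finset.sum_congr rfl fun b _ => ?_
        rw [pd_g_low g hgsymm a b j]; ring
    _ = (∑ a, ∑ b, lowG g b j a x * y a * y b)
          + ∑ a, ∑ b, lowG g a j b x * y a * y b := by
        simp [Finset.sum_add_distrib]
    _ = 2 * ∑ a, ∑ b, lowG g a j b x * y a * y b := by
        rw [Finset.sum_comm (f := fun a b => lowG g b j a x * y a * y b)]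
        have : (∑ b, ∑ a, lowG g b j a x * y a * y b)
            = ∑ a, ∑ b, lowG g a j b x * y a * y b := by
          refine Finset.sum_congr rfl fun b _ => Finset.sum_congr rfl fun a _ => by ring
        rw [this]; ring

lemma contr_V_g
    (hinv : ∀ i j, (∑ h, ginv i h x * g h j x) = if i = j then (1 : ℝ) else 0)
    (i : Fin n) :
    (∑ m, (∑ l, (∑ h, ginv m h x * Fform A h l x) * y l) * g i m x)
      = ∑ l, Fform A i l x * y l := by
  calc (∑ m, (∑ l, (∑ h, ginv m h x * Fform A h l x) * y l) * g i m x)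
      = ∑ m, ∑ l, ((∑ h, ginv m h x * Fform A h l x) * g i m x) * y l := by
        refine Finset.sum_congr rfl fun m _ => ?_
        rw [Finset.sum_mul]
        exact Finset.sum_congr rfl fun l _ => by ring
    _ = ∑ l, (∑ m, (∑ h, ginv m h x * Fform A h l x) * g i m x) * y l := by
        rw [Finset.sum_comm]
        exact Finset.sum_congr rfl fun l _ => (Finset.sum_mul _ _ _).symm
    _ = ∑ l, Fform A i l x * y l := by
        exact Finset.sum_congr rfl fun l _ => by rw [contr_Fup_g g ginv A x hinv i l]

lemma contr_V_S
    (hgsymm : ∀ i j x, g i j x = g j i x)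
    (hinv : ∀ i j, (∑ h, ginv i h x * g h j x) = if i = j then (1 : ℝ) else 0) :
    (∑ m, (∑ l, (∑ h, ginv m h x * Fform A h l x) * y l) * (∑ k, g m k x * y k)) = 0 := by
  calc (∑ m, (∑ l, (∑ h, ginv m h x * Fform A h l x) * y l) * (∑ k, g m k x * y k))
      = ∑ m, ∑ l, ((∑ h, ginv m h x * Fform A h l x) * (∑ k, g m k x * y k)) * y l := by
        refine Finset.sum_congr rfl fun m _ => ?_
        rw [Finset.sum_mul]
        exact Finset.sum_congr rfl fun l _ => by ring
    _ = ∑ l, (∑ m, (∑ h, ginv m h x * Fform A h l x) * (∑ k, g m k x * y k)) * y l := by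
        rw [Finset.sum_comm]
        exact Finset.sum_congr rfl fun l _ => (Finset.sum_mul _ _ _).symm
    _ = ∑ l, (∑ k, Fform A k l x * y k) * y l := by
        exact Finset.sum_congr rfl fun l _ => by
          rw [contr_Fup_S g ginv A x y hgsymm hinv l]
    _ = 0 := contr_W_y A x y

end Contr
end RandersProof

/-- For the Randers spray with parameter `α ≠ 0`, the horizontal covariant
derivative of the distinguished 1-form satisfies `D_{δ_j} l_i = (α/2) F_{ij}`; equivalently
`α F_{ij} = D_{δ_j} l_i − D_{δ_i} l_j`, where `D_{δ_j} l_i = δ_j l_i − G^k_{ij} l_k`. -/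
theorem randers_covariant_derivative_of_distinguished_form
    (g ginv : Fin n → Fin n → (Fin n → ℝ) → ℝ)
    (A : Fin n → (Fin n → ℝ) → ℝ) (α : ℝ) (hα : α ≠ 0)
    (hg : ∀ i j, ContDiff ℝ (⊤ : ℕ∞) (g i j)) (hginv : ∀ i j, ContDiff ℝ (⊤ : ℕ∞) (ginv i j))
    (hA : ∀ i, ContDiff ℝ (⊤ : ℕ∞) (A i))
    (hgsymm : ∀ i j x, g i j x = g j i x)
    (hinv : ∀ i j x, (∑ h, ginv i h x * g h j x) = if i = j then (1 : ℝ) else 0) :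
    ∀ (x y : Fin n → ℝ), 0 < Qf g x y → ∀ i j,
      (deltaD (Nspray (Gspray g ginv A α)) j (fun x' y' => lf g i x' y') x y
          - (∑ k, Gconn (Gspray g ginv A α) k i j x y * lf g k x y)
        = (α / 2) * Fform A i j x) ∧
      (α * Fform A i j x
        = (deltaD (Nspray (Gspray g ginv A α)) j (fun x' y' => lf g i x' y') x y
            - (∑ k, Gconn (Gspray g ginv A α) k i j x y * lf g k x y))
          - (deltaD (Nspray (Gspray g ginv A α)) i (fun x' y' => lf g j x' y') x y
            - (∑ k, Gconn (Gspray g ginv A α) k j i x y * lf g k x y))) := by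
  open RandersProof in
  intro x y hQ
  have hinvx : ∀ a b, (∑ h, ginv a h x * g h b x) = if a = b then (1 : ℝ) else 0 :=
    fun a b => hinv a b x
  have key : ∀ i j, deltaD (Nspray (Gspray g ginv A α)) j (fun x' y' => lf g i x' y') x y
      - (∑ k, Gconn (Gspray g ginv A α) k i j x y * lf g k x y)
      = (α / 2) * Fform A i j x := by
    intro i j
    have hu : nrm g x y ≠ 0 := (nrm_pos g hQ).ne'
    have hN : ∀ m, Nspray (Gspray g ginv A α) m j x y
        = ∑ k, christoffel g ginv m j k x * y k
          - α / 2 * (lf g j x y * (∑ l, (∑ h, ginv m h x * Fform A h l x) * y l)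
              + nrm g x y * (∑ h, ginv m h x * Fform A h j x)) :=
      fun m => Nspray_eq g ginv A hgsymm α m j hQ
    have hpdy : ∀ l, pdy (fun x' y' => lf g i x' y') l x y
        = g i l x / nrm g x y
          - (∑ k, g i k x * y k) * (∑ k, g l k x * y k) / nrm g x y ^ 3 :=
      fun l => pdy_lf g hgsymm i hQ l
    have hG : ∀ k, Gconn (Gspray g ginv A α) k i j x y
        = christoffel g ginv k i j x
          - α / 2 * (lf g i x y * (∑ h, ginv k h x * Fform A h j x)
              + (∑ l, (∑ h, ginv k h x * Fform A h l x) * y l)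
                  * (g i j x / nrm g x y
                      - (∑ a, g i a x * y a) * (∑ b, g j b x * y b) / nrm g x y ^ 3)
              + (∑ h, ginv k h x * Fform A h i x) * ((∑ b, g j b x * y b) / nrm g x y)) :=
      fun k => Gconn_eq g ginv A hgsymm α k i j hQ
    unfold deltaD
    rw [pdx_lf g hg i hQ j]
    simp only [hN, hpdy, hG]
    simp only [lf]
    have eflat1 : ∀ m : Fin n,
        (∑ k, christoffel g ginv m j k x * y k
          - α / 2 * ((∑ k, g j k x * y k) / nrm g x y
                * (∑ l, (∑ h, ginv m h x * Fform A h l x) * y l)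
              + nrm g x y * ∑ h, ginv m h x * Fform A h j x))
          * (g i m x / nrm g x y
              - (∑ k, g i k x * y k) * (∑ k, g m k x * y k) / nrm g x y ^ 3)
        =
        ((∑ k, christoffel g ginv m j k x * y k) * g i m x) * (nrm g x y)⁻¹
        - ((∑ k, christoffel g ginv m j k x * y k) * (∑ k, g m k x * y k))
            * ((∑ k, g i k x * y k) * (nrm g x y ^ 3)⁻¹)
        - ((∑ l, (∑ h, ginv m h x * Fform A h l x) * y l) * g i m x)
            * (α / 2 * (∑ k, g j k x * y k) * (nrm g x y ^ 2)⁻¹)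
        + ((∑ l, (∑ h, ginv m h x * Fform A h l x) * y l) * (∑ k, g m k x * y k))
            * (α / 2 * (∑ k, g j k x * y k) * (∑ k, g i k x * y k) * (nrm g x y ^ 4)⁻¹)
        - ((∑ h, ginv m h x * Fform A h j x) * g i m x)
            * (α / 2 * nrm g x y * (nrm g x y)⁻¹)
        + ((∑ h, ginv m h x * Fform A h j x) * (∑ k, g m k x * y k))
            * (α / 2 * nrm g x y * (∑ k, g i k x * y k) * (nrm g x y ^ 3)⁻¹) :=
      fun m => by ring
    have eflat2 : ∀ k : Fin n,
        (christoffel g ginv k i j x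
          - α / 2 * ((∑ k', g i k' x * y k') / nrm g x y
                * (∑ h, ginv k h x * Fform A h j x)
              + (∑ l, (∑ h, ginv k h x * Fform A h l x) * y l)
                  * (g i j x / nrm g x y
                      - (∑ a, g i a x * y a) * (∑ b, g j b x * y b) / nrm g x y ^ 3)
              + (∑ h, ginv k h x * Fform A h i x) * ((∑ b, g j b x * y b) / nrm g x y)))
          * ((∑ b, g k b x * y b) / nrm g x y)
        =
        (christoffel g ginv k i j x * (∑ b, g k b x * y b)) * (nrm g x y)⁻¹
        - ((∑ h, ginv k h x * Fform A h j x) * (∑ b, g k b x * y b))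
            * (α / 2 * (∑ a, g i a x * y a) * (nrm g x y ^ 2)⁻¹)
        - ((∑ l, (∑ h, ginv k h x * Fform A h l x) * y l) * (∑ b, g k b x * y b))
            * (α / 2 * (g i j x / nrm g x y
                - (∑ a, g i a x * y a) * (∑ b, g j b x * y b) / nrm g x y ^ 3)
              * (nrm g x y)⁻¹)
        - ((∑ h, ginv k h x * Fform A h i x) * (∑ b, g k b x * y b))
            * (α / 2 * (∑ b, g j b x * y b) * (nrm g x y ^ 2)⁻¹) :=
      fun k => by ring
    rw [Finset.sum_congr rfl fun m _ => eflat1 m, Finset.sum_congr rfl fun k _ => eflat2 k]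
    simp only [Finset.sum_add_distrib, Finset.sum_sub_distrib, ← Finset.sum_mul]
    rw [contr_pdx_S g x y hgsymm i j, contr_P g x y hgsymm j,
      contr_gamma_g g ginv x y hinvx i j, contr_gamma_S g ginv x y hgsymm hinvx j,
      contr_V_g g ginv A x y hinvx i, contr_V_S g ginv A x y hgsymm hinvx,
      contr_Fup_g g ginv A x hinvx i j, contr_Fup_S g ginv A x y hgsymm hinvx j,
      contr_Fup_S g ginv A x y hgsymm hinvx i,
      contr_gammac_S g ginv x y hgsymm hinvx i j]
    have hWZ : (∑ k, Fform A k i x * y k) = - ∑ l, Fform A i l x * y l := by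
      calc (∑ k, Fform A k i x * y k) = ∑ k, -(Fform A i k x * y k) :=
            Finset.sum_congr rfl fun k _ => by rw [Fform_anti A x k i]; ring
        _ = - ∑ k, Fform A i k x * y k := by simp
    rw [hWZ]
    field_simp
    ring
  intro i j
  refine ⟨key i j, ?_⟩
  rw [key i j, key j i]
  unfold Fform
  ring
end

section
/- The contortion vector B^i = −(α/2)‖y‖F^i_jy^j can be written as a fiber-derivative of the squared norm: B^i = (1/2)g^{ih} δ_h(‖y‖²), where δ_h = ∂/∂x^h − N^l_h ∂/∂y^l is the horizontal derivative of the Randers spray connection. -/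
open scoped BigOperators

variable {n : ℕ}

section Helpers

open ContinuousLinearMap

variable {n : ℕ}

/-- Derivative (as a CLM) of a quadratic form in `y`. -/
noncomputable def quadCLM (c : Fin n → Fin n → ℝ) (y : Fin n → ℝ) : (Fin n → ℝ) →L[ℝ] ℝ :=
  ∑ i, ∑ j, ((c i j * y i) • (proj j : (Fin n → ℝ) →L[ℝ] ℝ)
    + (y j) • (c i j • (proj i : (Fin n → ℝ) →L[ℝ] ℝ)))

lemma hasFDerivAt_quad (c : Fin n → Fin n → ℝ) (y : Fin n → ℝ) :
    HasFDerivAt (fun y' : Fin n → ℝ => ∑ i, ∑ j, c i j * y' i * y' j) (quadCLM c y) y := by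
  apply HasFDerivAt.fun_sum; intro i _
  apply HasFDerivAt.fun_sum; intro j _
  exact (((proj i : (Fin n → ℝ) →L[ℝ] ℝ).hasFDerivAt).const_mul _).mul
    (proj j : (Fin n → ℝ) →L[ℝ] ℝ).hasFDerivAt

lemma quadCLM_apply (c : Fin n → Fin n → ℝ) (y : Fin n → ℝ) (h : Fin n) :
    quadCLM c y (Pi.single h 1) = ∑ i, c i h * y i + ∑ j, c h j * y j := by
  simp only [quadCLM, ContinuousLinearMap.sum_apply, ContinuousLinearMap.add_apply,
    ContinuousLinearMap.smul_apply, proj_apply, Pi.single_apply, smul_eq_mul,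
    mul_ite, mul_one, mul_zero, Finset.sum_add_distrib, Finset.sum_ite_eq',
    Finset.mem_univ, if_true]
  congr 1
  rw [Finset.sum_comm]
  simp [Finset.sum_ite_eq', mul_comm]

/-- Derivative (as a CLM) of a linear form in `y`. -/
noncomputable def linCLM (C : Fin n → ℝ) : (Fin n → ℝ) →L[ℝ] ℝ :=
  ∑ j, C j • (proj j : (Fin n → ℝ) →L[ℝ] ℝ)

lemma hasFDerivAt_lin (C : Fin n → ℝ) (y : Fin n → ℝ) :
    HasFDerivAt (fun y' : Fin n → ℝ => ∑ j, C j * y' j) (linCLM C) y :=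
  HasFDerivAt.fun_sum fun j _ => ((proj j : (Fin n → ℝ) →L[ℝ] ℝ).hasFDerivAt).const_mul _

lemma linCLM_apply (C : Fin n → ℝ) (h : Fin n) : linCLM C (Pi.single h 1) = C h := by
  simp [linCLM, ContinuousLinearMap.sum_apply, Pi.single_apply, mul_ite,
    Finset.sum_ite_eq', Finset.mem_univ]

lemma pdy_Qf (g : Fin n → Fin n → (Fin n → ℝ) → ℝ) (x y : Fin n → ℝ) (h : Fin n) :
    pdy (fun x' y' => Qf g x' y') h x y = ∑ i, g i h x * y i + ∑ j, g h j x * y j := by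
  have hQ : HasFDerivAt (fun y' => Qf g x y') (quadCLM (fun i j => g i j x) y) y :=
    hasFDerivAt_quad (fun i j => g i j x) y
  rw [pdy]
  rw [hQ.fderiv]
  exact quadCLM_apply _ y h

lemma pdx_Qf (g : Fin n → Fin n → (Fin n → ℝ) → ℝ) (hg : ∀ i j, ContDiff ℝ (⊤ : ℕ∞) (g i j))
    (x y : Fin n → ℝ) (h : Fin n) :
    pdx (fun x' y' => Qf g x' y') h x y = ∑ i, ∑ j, y j * (y i * pd (g i j) h x) := by
  have hder : HasFDerivAt (fun x' => Qf g x' y)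
      (∑ i, ∑ j, (y j) • ((y i) • fderiv ℝ (g i j) x)) x := by
    apply HasFDerivAt.fun_sum; intro i _
    apply HasFDerivAt.fun_sum; intro j _
    exact ((((hg i j).differentiable (by simp)).differentiableAt.hasFDerivAt).mul_const
      (y i)).mul_const (y j)
  rw [pdx, hder.fderiv]
  simp [ContinuousLinearMap.sum_apply, pd]

end Helpers

section Helpers2

open ContinuousLinearMap

variable {n : ℕ}

lemma key_inv (g ginv : Fin n → Fin n → (Fin n → ℝ) → ℝ) (x : Fin n → ℝ)
    (hinv : ∀ i j, (∑ h, ginv i h x * g h j x) = if i = j then (1 : ℝ) else 0) :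
    ∀ m p, (∑ l, g m l x * ginv l p x) = if m = p then (1 : ℝ) else 0 := by
  intro m p
  have h1 : (Matrix.of (fun i j => ginv i j x) * Matrix.of (fun i j => g i j x)) = 1 := by
    ext i j
    simp [Matrix.mul_apply, hinv i j, Matrix.one_apply]
  have h2 := mul_eq_one_comm.mp h1
  have h3 := congrFun (congrFun h2 m) p
  simpa [Matrix.mul_apply, Matrix.one_apply] using h3

lemma contract (g ginv : Fin n → Fin n → (Fin n → ℝ) → ℝ) (x y : Fin n → ℝ)
    (hgsymm : ∀ i j x, g i j x = g j i x)
    (key : ∀ m p, (∑ l, g m l x * ginv l p x) = if m = p then (1 : ℝ) else 0)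
    (c : Fin n → ℝ) :
    ∑ l, (∑ p, ginv l p x * c p) * (∑ m, g l m x * y m) = ∑ m, c m * y m := by
  calc ∑ l, (∑ p, ginv l p x * c p) * (∑ m, g l m x * y m)
      = ∑ l, ∑ p, ∑ m, (c p * y m) * (g m l x * ginv l p x) := by
        refine Finset.sum_congr rfl fun l _ => ?_
        rw [Finset.sum_mul]
        refine Finset.sum_congr rfl fun p _ => ?_
        rw [Finset.mul_sum]
        refine Finset.sum_congr rfl fun m _ => ?_
        rw [hgsymm l m x]; ring
    _ = ∑ p, ∑ m, (c p * y m) * (∑ l, g m l x * ginv l p x) := by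
        rw [Finset.sum_comm]
        refine Finset.sum_congr rfl fun p _ => ?_
        rw [Finset.sum_comm]
        refine Finset.sum_congr rfl fun m _ => ?_
        rw [Finset.mul_sum]
    _ = ∑ m, c m * y m := by
        refine Finset.sum_congr rfl fun p _ => ?_
        simp [key, mul_ite, Finset.sum_ite_eq', Finset.mem_univ]

lemma antisym_zero (F : Fin n → Fin n → ℝ) (hF : ∀ p j, F p j = - F j p) (y : Fin n → ℝ) :
    ∑ j, (∑ m, F m j * y m) * y j = 0 := by
  have h : (∑ j, (∑ m, F m j * y m) * y j) = - ∑ j, (∑ m, F m j * y m) * y j := by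
    calc ∑ j, (∑ m, F m j * y m) * y j = ∑ j, ∑ m, F m j * y m * y j := by
          simp [Finset.sum_mul]
      _ = ∑ m, ∑ j, F m j * y m * y j := Finset.sum_comm
      _ = ∑ m, ∑ j, -(F j m * y j * y m) := by
          refine Finset.sum_congr rfl fun m _ => Finset.sum_congr rfl fun j _ => ?_
          rw [hF m j]; ring
      _ = - ∑ m, ∑ j, F j m * y j * y m := by
          simp
      _ = - ∑ j, (∑ m, F m j * y m) * y j := by
          rw [neg_inj]
          refine Finset.sum_congr rfl fun m _ => ?_
          rw [Finset.sum_mul]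
  linarith

lemma pd_symm (g : Fin n → Fin n → (Fin n → ℝ) → ℝ) (hgsymm : ∀ i j x, g i j x = g j i x)
    (a b k : Fin n) (x : Fin n → ℝ) : pd (g a b) k x = pd (g b a) k x := by
  have : g a b = g b a := funext fun x' => hgsymm a b x'
  rw [this]

lemma christoffel_symm (g ginv : Fin n → Fin n → (Fin n → ℝ) → ℝ)
    (hgsymm : ∀ i j x, g i j x = g j i x) (i j k : Fin n) (x : Fin n → ℝ) :
    christoffel g ginv i j k x = christoffel g ginv i k j x := by
  rw [christoffel, christoffel]
  congr 1
  refine Finset.sum_congr rfl fun h _ => ?_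
  rw [pd_symm g hgsymm j k]
  ring

lemma Fform_antisymm (A : Fin n → (Fin n → ℝ) → ℝ) (p j : Fin n) (x : Fin n → ℝ) :
    Fform A p j x = - Fform A j p x := by
  simp [Fform]

end Helpers2

section Helpers3

open ContinuousLinearMap

variable {n : ℕ}

lemma Nspray_eq (g ginv : Fin n → Fin n → (Fin n → ℝ) → ℝ)
    (A : Fin n → (Fin n → ℝ) → ℝ) (α : ℝ) (x y : Fin n → ℝ)
    (hq : 0 < Qf g x y) (l h : Fin n) :
    Nspray (Gspray g ginv A α) l h x y
      = (1/2) * (∑ i, christoffel g ginv l i h x * y i + ∑ j, christoffel g ginv l h j x * y j)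
        - ( ((α/2) * Real.sqrt (Qf g x y)) * (∑ p, ginv l p x * Fform A p h x)
          + (∑ j, (∑ p, ginv l p x * Fform A p j x) * y j)
            * ((α/2) * ((1/(2*Real.sqrt (Qf g x y)))
                * (∑ i, g i h x * y i + ∑ j, g h j x * y j)))) := by
  set C : Fin n → ℝ := fun j => ∑ p, ginv l p x * Fform A p j x with hC
  have hquad : HasFDerivAt
      (fun y' : Fin n → ℝ => ∑ j, ∑ k, christoffel g ginv l j k x * y' j * y' k)
      (quadCLM (fun j k => christoffel g ginv l j k x) y) y :=
    hasFDerivAt_quad _ y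
  have hQ : HasFDerivAt (fun y' => Qf g x y') (quadCLM (fun i j => g i j x) y) y :=
    hasFDerivAt_quad (fun i j => g i j x) y
  have hnrm : HasFDerivAt (fun y' => Real.sqrt (Qf g x y'))
      ((1/(2*Real.sqrt (Qf g x y))) • quadCLM (fun i j => g i j x) y) y :=
    (Real.hasDerivAt_sqrt hq.ne').comp_hasFDerivAt y hQ
  have htot : HasFDerivAt
      (fun y' : Fin n → ℝ =>
        (1/2) * (∑ j, ∑ k, christoffel g ginv l j k x * y' j * y' k)
          - ((α/2) * Real.sqrt (Qf g x y')) * (∑ j, C j * y' j))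
      (((1/2 : ℝ) • quadCLM (fun j k => christoffel g ginv l j k x) y)
        - (((α/2) * Real.sqrt (Qf g x y)) • linCLM C
          + (∑ j, C j * y j) • ((α/2 : ℝ) •
              ((1/(2*Real.sqrt (Qf g x y))) • quadCLM (fun i j => g i j x) y)))) y :=
    (hquad.const_mul _).sub ((hnrm.const_mul (α/2)).mul (hasFDerivAt_lin C y))
  have hfun : Gspray g ginv A α l x =
      (fun y' : Fin n → ℝ =>
        (1/2) * (∑ j, ∑ k, christoffel g ginv l j k x * y' j * y' k)
          - ((α/2) * Real.sqrt (Qf g x y')) * (∑ j, C j * y' j)) := by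
    funext y'
    simp only [Gspray, GsprayF, nrm, hC]
  rw [Nspray, pdy, hfun, htot.fderiv]
  simp only [ContinuousLinearMap.sub_apply, ContinuousLinearMap.add_apply,
    ContinuousLinearMap.smul_apply, smul_eq_mul, quadCLM_apply, linCLM_apply]
  rfl

end Helpers3

section Helpers4

variable {n : ℕ}

lemma sum_swap_yy (y : Fin n → ℝ) (f : Fin n → Fin n → ℝ) :
    ∑ j, ∑ m, y j * y m * f j m = ∑ j, ∑ m, y j * y m * f m j := by
  rw [Finset.sum_comm]
  exact Finset.sum_congr rfl fun j _ => Finset.sum_congr rfl fun m _ => by ring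

lemma deltaQ_eq (g ginv : Fin n → Fin n → (Fin n → ℝ) → ℝ)
    (A : Fin n → (Fin n → ℝ) → ℝ) (α : ℝ)
    (hg : ∀ i j, ContDiff ℝ (⊤ : ℕ∞) (g i j))
    (hgsymm : ∀ i j x, g i j x = g j i x)
    (hinv : ∀ i j x, (∑ h, ginv i h x * g h j x) = if i = j then (1 : ℝ) else 0)
    (x y : Fin n → ℝ) (hq : 0 < Qf g x y) (h : Fin n) :
    deltaD (Nspray (Gspray g ginv A α)) h (fun x' y' => Qf g x' y') x y
      = α * Real.sqrt (Qf g x y) * ∑ m, Fform A m h x * y m := by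
  set s := Real.sqrt (Qf g x y) with hs
  have key := key_inv g ginv x (fun i j => hinv i j x)
  have hW : ∀ j, ∑ l, (∑ p, ginv l p x * Fform A p j x) * (∑ m, g l m x * y m)
      = ∑ m, Fform A m j x * y m :=
    fun j => contract g ginv x y hgsymm key _
  have hGam : ∀ b, ∑ l, christoffel g ginv l h b x * (∑ m, g l m x * y m)
      = ∑ m, ((1/2) * (pd (g m h) b x + pd (g m b) h x - pd (g h b) m x)) * y m := by
    intro b
    have e1 : ∀ l, christoffel g ginv l h b x
        = ∑ p, ginv l p x * ((1/2) * (pd (g p h) b x + pd (g p b) h x - pd (g h b) p x)) := by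
      intro l
      rw [christoffel, Finset.mul_sum]
      exact Finset.sum_congr rfl fun p _ => by ring
    calc ∑ l, christoffel g ginv l h b x * (∑ m, g l m x * y m)
        = ∑ l, (∑ p, ginv l p x * ((1/2) * (pd (g p h) b x + pd (g p b) h x - pd (g h b) p x)))
            * (∑ m, g l m x * y m) := Finset.sum_congr rfl fun l _ => by rw [e1 l]
      _ = ∑ m, ((1/2) * (pd (g m h) b x + pd (g m b) h x - pd (g h b) m x)) * y m :=
          contract g ginv x y hgsymm key _
  have hpdyl : ∀ l, pdy (fun x' y' => Qf g x' y') l x y = 2 * ∑ m, g l m x * y m := by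
    intro l
    rw [pdy_Qf]
    have e : ∑ i, g i l x * y i = ∑ i, g l i x * y i :=
      Finset.sum_congr rfl fun i _ => by rw [hgsymm i l x]
    rw [e]; ring
  have hNs : ∀ l, Nspray (Gspray g ginv A α) l h x y
      = (∑ j, christoffel g ginv l h j x * y j)
        - ( ((α/2) * s) * (∑ p, ginv l p x * Fform A p h x)
          + (∑ j, (∑ p, ginv l p x * Fform A p j x) * y j)
            * ((α/2) * ((1/(2*s)) * (∑ i, g i h x * y i + ∑ j, g h j x * y j)))) := by
    intro l
    rw [Nspray_eq g ginv A α x y hq l h]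
    have e : ∑ i, christoffel g ginv l i h x * y i = ∑ j, christoffel g ginv l h j x * y j :=
      Finset.sum_congr rfl fun i _ => by rw [christoffel_symm g ginv hgsymm l i h]
    rw [e, ← hs]; ring
  have hsum : ∑ l, Nspray (Gspray g ginv A α) l h x y * pdy (fun x' y' => Qf g x' y') l x y
      = 2 * (∑ l, (∑ j, christoffel g ginv l h j x * y j) * (∑ m, g l m x * y m))
        - (α * s) * (∑ l, (∑ p, ginv l p x * Fform A p h x) * (∑ m, g l m x * y m))
        - (α * ((1/(2*s)) * (∑ i, g i h x * y i + ∑ j, g h j x * y j)))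
          * (∑ l, (∑ j, (∑ p, ginv l p x * Fform A p j x) * y j) * (∑ m, g l m x * y m)) := by
    have e : ∀ l ∈ Finset.univ,
        Nspray (Gspray g ginv A α) l h x y * pdy (fun x' y' => Qf g x' y') l x y
        = 2 * ((∑ j, christoffel g ginv l h j x * y j) * (∑ m, g l m x * y m))
          - (α * s) * ((∑ p, ginv l p x * Fform A p h x) * (∑ m, g l m x * y m))
          - (α * ((1/(2*s)) * (∑ i, g i h x * y i + ∑ j, g h j x * y j)))
            * ((∑ j, (∑ p, ginv l p x * Fform A p j x) * y j) * (∑ m, g l m x * y m)) := by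
      intro l _
      rw [hNs l, hpdyl l]; ring
    rw [Finset.sum_congr rfl e, Finset.sum_sub_distrib, Finset.sum_sub_distrib,
      ← Finset.mul_sum, ← Finset.mul_sum, ← Finset.mul_sum]
  have hzero : ∑ l, (∑ j, (∑ p, ginv l p x * Fform A p j x) * y j) * (∑ m, g l m x * y m)
      = 0 := by
    calc ∑ l, (∑ j, (∑ p, ginv l p x * Fform A p j x) * y j) * (∑ m, g l m x * y m)
        = ∑ l, ∑ j, ((∑ p, ginv l p x * Fform A p j x) * (∑ m, g l m x * y m)) * y j := by
          refine Finset.sum_congr rfl fun l _ => ?_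
          rw [Finset.sum_mul]
          exact Finset.sum_congr rfl fun j _ => by ring
      _ = ∑ j, (∑ l, (∑ p, ginv l p x * Fform A p j x) * (∑ m, g l m x * y m)) * y j := by
          rw [Finset.sum_comm]
          exact Finset.sum_congr rfl fun j _ => by rw [Finset.sum_mul]
      _ = ∑ j, (∑ m, Fform A m j x * y m) * y j :=
          Finset.sum_congr rfl fun j _ => by rw [hW j]
      _ = 0 := antisym_zero _ (fun p j => Fform_antisymm A p j x) y
  have hGamTot : ∑ l, (∑ j, christoffel g ginv l h j x * y j) * (∑ m, g l m x * y m)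
      = ∑ j, (∑ m, ((1/2) * (pd (g m h) j x + pd (g m j) h x - pd (g h j) m x)) * y m) * y j := by
    calc ∑ l, (∑ j, christoffel g ginv l h j x * y j) * (∑ m, g l m x * y m)
        = ∑ l, ∑ j, (christoffel g ginv l h j x * (∑ m, g l m x * y m)) * y j := by
          refine Finset.sum_congr rfl fun l _ => ?_
          rw [Finset.sum_mul]
          exact Finset.sum_congr rfl fun j _ => by ring
      _ = ∑ j, (∑ l, christoffel g ginv l h j x * (∑ m, g l m x * y m)) * y j := by
          rw [Finset.sum_comm]
          exact Finset.sum_congr rfl fun j _ => by rw [Finset.sum_mul]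
      _ = ∑ j, (∑ m, ((1/2) * (pd (g m h) j x + pd (g m j) h x - pd (g h j) m x)) * y m) * y j :=
          Finset.sum_congr rfl fun j _ => by rw [hGam j]
  have hhalf : 2 * ∑ j, (∑ m, ((1/2) * (pd (g m h) j x + pd (g m j) h x - pd (g h j) m x)) * y m) * y j
      = ∑ i, ∑ j, y j * (y i * pd (g i j) h x) := by
    have c1 : ∑ j, ∑ m, y j * y m * pd (g m h) j x = ∑ j, ∑ m, y j * y m * pd (g h j) m x := by
      rw [sum_swap_yy y (fun j m => pd (g m h) j x)]
      exact Finset.sum_congr rfl fun j _ => Finset.sum_congr rfl fun m _ => by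
        rw [pd_symm g hgsymm j h m x]
    have c2 : ∑ j, ∑ m, y j * y m * pd (g m j) h x = ∑ i, ∑ j, y j * (y i * pd (g i j) h x) := by
      rw [sum_swap_yy y (fun j m => pd (g m j) h x)]
      exact Finset.sum_congr rfl fun i _ => Finset.sum_congr rfl fun j _ => by ring
    calc 2 * ∑ j, (∑ m, ((1/2) * (pd (g m h) j x + pd (g m j) h x - pd (g h j) m x)) * y m) * y j
        = ∑ j, ∑ m, (y j * y m * pd (g m h) j x + y j * y m * pd (g m j) h x
            - y j * y m * pd (g h j) m x) := by
          rw [Finset.mul_sum]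
          refine Finset.sum_congr rfl fun j _ => ?_
          rw [Finset.sum_mul, Finset.mul_sum]
          exact Finset.sum_congr rfl fun m _ => by ring
      _ = (∑ j, ∑ m, y j * y m * pd (g m h) j x) + (∑ j, ∑ m, y j * y m * pd (g m j) h x)
            - (∑ j, ∑ m, y j * y m * pd (g h j) m x) := by
          simp only [Finset.sum_add_distrib, Finset.sum_sub_distrib]
      _ = ∑ i, ∑ j, y j * (y i * pd (g i j) h x) := by
          rw [c1, c2]; ring
  rw [deltaD, pdx_Qf g hg x y h, hsum, hGamTot, hzero, hW h, ← hhalf]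
  ring

end Helpers4

/-- The contortion vector `B^i = −(α/2)‖y‖ F^i_j y^j` can be written as
`B^i = (1/2) g^{ih} δ_h(‖y‖²)`, where `δ_h = ∂/∂x^h − N^l_h ∂/∂y^l` is the horizontal
derivative of the Randers spray connection. -/
theorem contortion_as_horizontal_derivative_of_norm
    (g ginv : Fin n → Fin n → (Fin n → ℝ) → ℝ)
    (A : Fin n → (Fin n → ℝ) → ℝ) (α : ℝ)
    (hg : ∀ i j, ContDiff ℝ (⊤ : ℕ∞) (g i j)) (hginv : ∀ i j, ContDiff ℝ (⊤ : ℕ∞) (ginv i j))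
    (hA : ∀ i, ContDiff ℝ (⊤ : ℕ∞) (A i))
    (hgsymm : ∀ i j x, g i j x = g j i x)
    (hinv : ∀ i j x, (∑ h, ginv i h x * g h j x) = if i = j then (1 : ℝ) else 0) :
    ∀ (x y : Fin n → ℝ), 0 < Qf g x y → ∀ i,
      Bvec g ginv (Fform A) α i x y
        = (1 / 2) * ∑ h, ginv i h x *
            deltaD (Nspray (Gspray g ginv A α)) h (fun x' y' => Qf g x' y') x y := by
  
  intro x y hq i
  have e : ∀ h ∈ (Finset.univ : Finset (Fin n)),
      ginv i h x * deltaD (Nspray (Gspray g ginv A α)) h (fun x' y' => Qf g x' y') x y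
        = ginv i h x * (α * Real.sqrt (Qf g x y) * ∑ m, Fform A m h x * y m) :=
    fun h _ => by rw [deltaQ_eq g ginv A α hg hgsymm hinv x y hq h]
  rw [Finset.sum_congr rfl e, Bvec]
  simp only [nrm]
  have eRh : ∀ h, ∑ m, -((α/2) * Real.sqrt (Qf g x y)) * (ginv i h x * Fform A h m x * y m)
      = (1/2) * (ginv i h x * (α * Real.sqrt (Qf g x y) * ∑ m, Fform A m h x * y m)) := by
    intro h
    calc ∑ m, -((α/2) * Real.sqrt (Qf g x y)) * (ginv i h x * Fform A h m x * y m)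
        = ∑ m, (1/2) * (ginv i h x * (α * Real.sqrt (Qf g x y) * (Fform A m h x * y m))) :=
          Finset.sum_congr rfl fun m _ => by rw [Fform_antisymm A h m x]; ring
      _ = (1/2) * (ginv i h x * (α * Real.sqrt (Qf g x y) * ∑ m, Fform A m h x * y m)) := by
          rw [← Finset.mul_sum, ← Finset.mul_sum, ← Finset.mul_sum]
  calc -(α / 2) * Real.sqrt (Qf g x y) * ∑ j, (∑ h, ginv i h x * Fform A h j x) * y j
      = ∑ j, ∑ h, -((α/2) * Real.sqrt (Qf g x y)) * (ginv i h x * Fform A h j x * y j) := by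
        rw [Finset.mul_sum]
        refine Finset.sum_congr rfl fun j _ => ?_
        rw [Finset.sum_mul, Finset.mul_sum]
        exact Finset.sum_congr rfl fun h _ => by ring
    _ = ∑ h, ∑ j, -((α/2) * Real.sqrt (Qf g x y)) * (ginv i h x * Fform A h j x * y j) :=
        Finset.sum_comm
    _ = ∑ h, (1/2) * (ginv i h x * (α * Real.sqrt (Qf g x y) * ∑ m, Fform A m h x * y m)) :=
        Finset.sum_congr rfl fun h _ => eRh h
    _ = (1 / 2) * ∑ h, ginv i h x * (α * Real.sqrt (Qf g x y) * ∑ m, Fform A m h x * y m) :=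
        (Finset.mul_sum _ _ _).symm
end
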